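/- Let α be irrational with continued fraction convergents p_k/q_k. If m is an integer with q_k ≤ |m| < q_{k+1} and q_k does not divide m, then ‖mα‖ ≥ 1/(2|m|), where ‖θ‖ denotes the distance from θ to the nearest integer. -/

import Mathlib

/-!
Suppose `‖mα‖ < 1/(2|m|)` and let `p` be the integer nearest to `mα`. Then `|α - p/m| < 1/(2m²)`,
so by Legendre's theorem `p/m` is a convergent `p_n/q_n`. As `p_n q_{n+1} - q_n p_{n+1} = ±1`,
`q_n ∣ m`; hence `q_n ≤ |m| < q_{k+1}` gives `n ≤ k`, and `n = k` is excluded by `q_k ∤ m`.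
For `n < k` the determinant identity and `q_{n+2} ≥ q_{n+1} + q_n` give
`‖mα‖ ≥ |q_n α - p_n| ≥ 1/(q_n + q_{n+1}) ≥ 1/(2 q_k) ≥ 1/(2|m|)`, a contradiction.
-/

/-- Distance from a real number to the nearest integer. -/
noncomputable def distInt (θ : ℝ) : ℝ := |θ - round θ|

namespace GenContFract

open GenContFract (of)

section FloorRing

variable {K : Type*} [Field K] [LinearOrder K] [FloorRing K]

theorem exists_int_eq_of_contsAux (v : K) (n : ℕ) : ∃ a b : ℤ, (of v).contsAux n = ⟨a, b⟩ := by
  induction n using Nat.twoStepInduction with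
  | zero => exact ⟨1, 0, by simp [contsAux]⟩
  | one => exact ⟨⌊v⌋, 1, by simp [contsAux, of_h_eq_floor]⟩
  | more n ih₀ ih₁ =>
    obtain ⟨a₀, b₀, h₀⟩ := ih₀
    obtain ⟨a₁, b₁, h₁⟩ := ih₁
    cases hs : (of v).s.get? n with
    | none => exact ⟨a₁, b₁, (contsAux_stable_step_of_terminated hs).trans h₁⟩
    | some gp =>
      obtain ⟨ha, z, hz⟩ := of_partNum_eq_one_and_exists_int_partDen_eq hs
      refine ⟨z * a₁ + a₀, z * b₁ + b₀, ?_⟩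
      rw [contsAux_recurrence hs h₀ h₁, ha, hz]
      simp

theorem exists_int_eq_nums_and_dens (v : K) (n : ℕ) :
    ∃ a b : ℤ, (of v).nums n = a ∧ (of v).dens n = b := by
  obtain ⟨a, b, h⟩ := exists_int_eq_of_contsAux v (n + 1)
  exact ⟨a, b, congrArg Pair.a h, congrArg Pair.b h⟩

theorem of_determinant {v : K} {n : ℕ} (hn : ¬(of v).TerminatedAt n) :
    (of v).nums n * (of v).dens (n + 1) - (of v).dens n * (of v).nums (n + 1) = (-1) ^ (n + 1) :=
  SimpContFract.determinant (s := SimpContFract.of v) hn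

end FloorRing

variable {K : Type*} [Field K] [LinearOrder K] [IsStrictOrderedRing K] [FloorRing K]

theorem of_dens_monotone (v : K) : Monotone (of v).dens :=
  monotone_nat_of_le_succ fun _ ↦ of_den_mono

theorem one_le_of_den (v : K) (n : ℕ) : 1 ≤ (of v).dens n :=
  zeroth_den_eq_one (g := of v) ▸ of_dens_monotone v n.zero_le

theorem zero_lt_of_den (v : K) (n : ℕ) : 0 < (of v).dens n :=
  one_pos.trans_le (one_le_of_den v n)

theorem dens_dvd_of_convs_eq_div {v : K} {n : ℕ} (hn : ¬(of v).TerminatedAt n) {p m b : ℤ}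
    (hb : (of v).dens n = b) (h : (of v).convs n = p / m) : b ∣ m := by
  rcases eq_or_ne m 0 with rfl | hm
  · exact dvd_zero b
  obtain ⟨a, -, ha, -⟩ := exists_int_eq_nums_and_dens v n
  obtain ⟨a', b', ha', hb'⟩ := exists_int_eq_nums_and_dens v (n + 1)
  have hdet : a * b' - b * a' = (-1) ^ (n + 1) := by
    have := of_determinant hn
    rw [ha, hb, ha', hb'] at this
    exact_mod_cast this
  have hcross : p * b = a * m := by
    have hb0 : (b : K) ≠ 0 := hb ▸ (zero_lt_of_den v n).ne'
    rw [conv_eq_num_div_den, ha, hb, div_eq_div_iff hb0 (by exact_mod_cast hm)] at h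
    exact_mod_cast h.symm
  have hsq : ((-1 : ℤ) ^ (n + 1)) ^ 2 = 1 := by rw [pow_right_comm, neg_one_sq, one_pow]
  -- `m = m · det² = det · b · (p b' - a' m)`, using `p b = a m`
  exact ⟨(-1) ^ (n + 1) * (p * b' - a' * m), by
    linear_combination (-m * (-1) ^ (n + 1)) * hdet - (-1) ^ (n + 1) * b' * hcross - m * hsq⟩

theorem abs_dens_mul_sub_nums_le {v : K} {n : ℕ} (hn : ¬(of v).TerminatedAt n) :
    |(of v).dens n * v - (of v).nums n| ≤ 1 / (of v).dens (n + 1) := by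
  have hB : 0 < (of v).dens n := zero_lt_of_den v n
  have hB' : 0 < (of v).dens (n + 1) := zero_lt_of_den v (n + 1)
  have hconv := abs_sub_convs_le hn
  rw [conv_eq_num_div_den] at hconv
  calc |(of v).dens n * v - (of v).nums n|
      = |(of v).dens n * (v - (of v).nums n / (of v).dens n)| := by
        rw [mul_sub, mul_div_cancel₀ _ hB.ne']
    _ = (of v).dens n * |v - (of v).nums n / (of v).dens n| := by rw [abs_mul, abs_of_pos hB]
    _ ≤ (of v).dens n * (1 / ((of v).dens n * (of v).dens (n + 1))) := by gcongr
    _ = 1 / (of v).dens (n + 1) := by field_simp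

theorem dens_add_dens_le_dens_add_two {v : K} {n : ℕ} (hn : ¬(of v).TerminatedAt (n + 1)) :
    (of v).dens n + (of v).dens (n + 1) ≤ (of v).dens (n + 2) := by
  obtain ⟨gp, hs⟩ := Option.ne_none_iff_exists'.1 hn
  have ha : gp.a = 1 := of_partNum_eq_one (partNum_eq_s_a hs)
  have hb : 1 ≤ gp.b := of_one_le_get?_partDen (partDen_eq_s_b hs)
  rw [dens_recurrence hs rfl rfl, ha, one_mul, add_comm]
  gcongr
  exact le_mul_of_one_le_left zero_le_of_den hb

theorem one_le_dens_mul_abs_add_dens_mul_abs {v : K} {n : ℕ} (hn : ¬(of v).TerminatedAt n) :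
    1 ≤ (of v).dens n * |(of v).dens (n + 1) * v - (of v).nums (n + 1)|
      + (of v).dens (n + 1) * |(of v).dens n * v - (of v).nums n| := by
  set A := (of v).nums n
  set B := (of v).dens n
  set A' := (of v).nums (n + 1)
  set B' := (of v).dens (n + 1)
  have hdet : A * B' - B * A' = (-1) ^ (n + 1) := of_determinant hn
  calc (1 : K) = |B * (B' * v - A') - B' * (B * v - A)| := by
        rw [show B * (B' * v - A') - B' * (B * v - A) = A * B' - B * A' by ring, hdet]
        simp
    _ ≤ |B * (B' * v - A')| + |B' * (B * v - A)| := abs_sub _ _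
    _ = B * |B' * v - A'| + B' * |B * v - A| := by
        rw [abs_mul, abs_mul, abs_of_nonneg (zero_le_of_den : 0 ≤ B),
          abs_of_nonneg (zero_le_of_den : 0 ≤ B')]

theorem one_div_dens_add_dens_le_abs_dens_mul_sub_nums {v : K} {n : ℕ}
    (hn : ¬(of v).TerminatedAt (n + 1)) :
    1 / ((of v).dens n + (of v).dens (n + 1)) ≤ |(of v).dens n * v - (of v).nums n| := by
  set B := (of v).dens n
  set B' := (of v).dens (n + 1)
  set d := |B * v - (of v).nums n|
  set d' := |B' * v - (of v).nums (n + 1)|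
  have hB : 0 < B := zero_lt_of_den v n
  have hB' : 0 < B' := zero_lt_of_den v (n + 1)
  have hdet : 1 ≤ B * d' + B' * d :=
    one_le_dens_mul_abs_add_dens_mul_abs (mt (terminated_stable n.le_succ) hn)
  have hnext : d' * (B + B') ≤ 1 := by
    have hB'' := zero_lt_of_den v (n + 2)
    calc d' * (B + B') ≤ 1 / (of v).dens (n + 2) * (of v).dens (n + 2) := by
          gcongr
          exacts [abs_dens_mul_sub_nums_le hn, dens_add_dens_le_dens_add_two hn]
      _ = 1 := by field_simp
  rw [div_le_iff₀ (add_pos hB hB')]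
  nlinarith [mul_le_mul_of_nonneg_left hnext hB.le]

theorem abs_dens_mul_sub_nums_le_of_convs_eq_div {v p m : K} {n : ℕ}
    (h : (of v).convs n = p / m) (hle : (of v).dens n ≤ |m|) :
    |(of v).dens n * v - (of v).nums n| ≤ |m * v - p| := by
  have hB : 0 < (of v).dens n := zero_lt_of_den v n
  have hm : 0 < |m| := hB.trans_le hle
  have hA : (of v).nums n = (of v).dens n * (p / m) := by
    rw [← h, conv_eq_num_div_den, mul_div_cancel₀ _ hB.ne']
  calc |(of v).dens n * v - (of v).nums n| = (of v).dens n / |m| * |m * v - p| := by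
        have hm0 : m ≠ 0 := abs_pos.1 hm
        rw [hA, ← mul_sub, abs_mul, abs_of_pos hB,
          show v - p / m = (m * v - p) / m by field_simp, abs_div]
        ring
    _ ≤ 1 * |m * v - p| := by gcongr; exact div_le_one_of_le₀ hle hm.le
    _ = |m * v - p| := one_mul _

theorem one_div_two_mul_abs_le_abs_mul_sub_of_convs_eq_div {v p m : K} {n : ℕ}
    (hn : ¬(of v).TerminatedAt (n + 1)) (h : (of v).convs n = p / m)
    (hle : (of v).dens (n + 1) ≤ |m|) : 1 / (2 * |m|) ≤ |m * v - p| := by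
  have hle' : (of v).dens n ≤ |m| := of_den_mono.trans hle
  calc 1 / (2 * |m|) ≤ 1 / ((of v).dens n + (of v).dens (n + 1)) :=
        one_div_le_one_div_of_le (add_pos (zero_lt_of_den v n) (zero_lt_of_den v (n + 1)))
          (by linarith)
    _ ≤ |(of v).dens n * v - (of v).nums n| := one_div_dens_add_dens_le_abs_dens_mul_sub_nums hn
    _ ≤ |m * v - p| := abs_dens_mul_sub_nums_le_of_convs_eq_div h hle'

theorem not_terminatedAt_of_irrational {ξ : ℝ} (hξ : Irrational ξ) (n : ℕ) :
    ¬(of ξ).TerminatedAt n := fun h ↦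
  let ⟨q, hq⟩ := (terminates_iff_rat ξ).1 ⟨n, h⟩
  hξ ⟨q, hq.symm⟩

end GenContFract

theorem Real.exists_convs_eq_div_of_abs_mul_sub_lt {ξ : ℝ} {p m : ℤ}
    (h : |m * ξ - p| < 1 / (2 * |(m : ℝ)|)) : ∃ n, (GenContFract.of ξ).convs n = p / m := by
  have hm : (m : ℝ) ≠ 0 := by
    rintro hm
    rw [hm, abs_zero, mul_zero, div_zero] at h
    exact (abs_nonneg _).not_gt h
  set r : ℚ := p / m
  have hr : (r : ℝ) = p / m := by push_cast [r]; rfl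
  have hden : (r.den : ℝ) ≤ |(m : ℝ)| := by
    have hdvd : (r.den : ℤ) ∣ m := by simpa [r, Rat.divInt_eq_div] using Rat.den_dvd p m
    have := Int.le_of_dvd (abs_pos.2 (by exact_mod_cast hm)) ((dvd_abs _ _).2 hdvd)
    exact_mod_cast this
  have happrox : |ξ - r| < 1 / (2 * (r.den : ℝ) ^ 2) :=
    calc |ξ - r| = |m * ξ - p| / |(m : ℝ)| := by
          rw [hr, ← abs_div]
          congr 1
          field_simp
      _ < 1 / (2 * |(m : ℝ)|) / |(m : ℝ)| := by gcongr
      _ = 1 / (2 * |(m : ℝ)| ^ 2) := by ring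
      _ ≤ 1 / (2 * (r.den : ℝ) ^ 2) := by gcongr
  obtain ⟨n, hn⟩ := Real.exists_convs_eq_rat happrox
  exact ⟨n, hn.trans hr⟩

open GenContFract

/-- If `q_k ≤ |m| < q_{k+1}` and `q_k ∤ m`, where `q_k` are the continued fraction
convergent denominators of the irrational `α`, then `‖mα‖ ≥ 1/(2|m|)`. -/
theorem nonresonant_freq_lower_bound (α : ℝ) (hα : Irrational α)
    (q : ℕ → ℕ) (hq : ∀ j, (q j : ℝ) = (GenContFract.of α).dens j)
    (k : ℕ) (m : ℤ)
    (hm₁ : (q k : ℤ) ≤ |m|) (hm₂ : |m| < (q (k + 1) : ℤ))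
    (hdvd : ¬ ((q k : ℤ) ∣ m)) :
    distInt (m * α) ≥ 1 / (2 * |(m : ℝ)|) := by
  have hq_mono : Monotone q := fun i j hij ↦ by
    exact_mod_cast (hq i).trans_le ((of_dens_monotone α hij).trans_eq (hq j).symm)
  by_contra! hlt
  obtain ⟨n, hn⟩ := Real.exists_convs_eq_div_of_abs_mul_sub_lt hlt
  have hqn_dvd : (q n : ℤ) ∣ m :=
    dens_dvd_of_convs_eq_div (not_terminatedAt_of_irrational hα n) (by simp [hq]) hn
  rcases lt_trichotomy n k with hnk | rfl | hkn
  · have hle : (GenContFract.of α).dens (n + 1) ≤ |(m : ℝ)| := by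
      rw [← hq]
      exact_mod_cast (Int.ofNat_le.2 (hq_mono hnk)).trans hm₁
    exact hlt.not_ge (one_div_two_mul_abs_le_abs_mul_sub_of_convs_eq_div
      (not_terminatedAt_of_irrational hα (n + 1)) hn hle)
  · exact hdvd hqn_dvd
  · have hm0 : m ≠ 0 := by rintro rfl; exact hdvd (dvd_zero _)
    have hqn_le : (q n : ℤ) ≤ |m| := Int.le_of_dvd (abs_pos.2 hm0) ((dvd_abs _ _).2 hqn_dvd)
    have : q (k + 1) ≤ q n := hq_mono hkn
    omega
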